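/- Let z_1, …, z_m be i.i.d. standard Gaussian random variables and let t > 0. Then P(∑_{i=1}^m z_i² ≥ m + 2√(m·t) + 2t) ≤ e^{-t}. -/

import Mathlib

open MeasureTheory ProbabilityTheory Finset
open scoped ENNReal NNReal

lemma aux_integrable_pi_prod {n : ℕ} {ν : Measure ℝ} [SigmaFinite ν] {f : ℝ → ℝ}
    (hf : Integrable f ν) :
    Integrable (fun x : Fin n → ℝ => ∏ i, f (x i)) (Measure.pi fun _ => ν) := by
  induction n with
  | zero =>
      rw [Measure.pi_of_empty]
      simp only [Finset.univ_eq_empty, Finset.prod_empty]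
      exact integrable_const _
  | succ n ih =>
      have h := (measurePreserving_piFinSuccAbove (fun _ : Fin (n + 1) => ν) 0).symm
      rw [← h.integrable_comp_emb (MeasurableEquiv.measurableEmbedding _)]
      have heq : ((fun x : Fin (n + 1) → ℝ => ∏ i, f (x i)) ∘
          (MeasurableEquiv.piFinSuccAbove (fun _ : Fin (n + 1) => ℝ) 0).symm)
          = fun p : ℝ × (Fin n → ℝ) => f p.1 * ∏ i, f (p.2 i) := by
        ext p
        simp [MeasurableEquiv.piFinSuccAbove_symm_apply, Fin.insertNthEquiv,
          Fin.insertNth_zero, Fin.prod_univ_succ, Fin.zero_succAbove, Function.comp_def]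
      rw [heq]
      exact hf.mul_prod ih

lemma aux_integral_pi_prod {n : ℕ} (ν : Measure ℝ) [SigmaFinite ν] (f : ℝ → ℝ) :
    ∫ x : Fin n → ℝ, ∏ i, f (x i) ∂(Measure.pi fun _ => ν) = (∫ x, f x ∂ν) ^ n := by
  induction n with
  | zero =>
      rw [Measure.pi_of_empty]
      simp
  | succ n ih =>
      have h := (measurePreserving_piFinSuccAbove (fun _ : Fin (n + 1) => ν) 0).symm
      rw [← h.integral_comp']
      have heq : ∀ p : ℝ × (Fin n → ℝ), (∏ i : Fin (n + 1),
            f ((MeasurableEquiv.piFinSuccAbove (fun _ : Fin (n + 1) => ℝ) 0).symm p i))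
          = f p.1 * ∏ i, f (p.2 i) := by
        intro p
        simp [MeasurableEquiv.piFinSuccAbove_symm_apply, Fin.insertNthEquiv,
          Fin.insertNth_zero, Fin.prod_univ_succ, Fin.zero_succAbove, Function.comp_def]
      simp only [heq]
      rw [integral_prod_mul f (fun y : Fin n → ℝ => ∏ i, f (y i)), ih, pow_succ]
      ring

lemma aux_gaussian_sq (l : ℝ) (hl : l < 1 / 2) :
    Integrable (fun x => Real.exp (l * x ^ 2)) (gaussianReal 0 1) ∧
    ∫ x, Real.exp (l * x ^ 2) ∂(gaussianReal 0 1)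
      = (Real.sqrt (2 * Real.pi))⁻¹ * Real.sqrt (Real.pi / (1 / 2 - l)) := by
  have hb : (0:ℝ) < 1 / 2 - l := by linarith
  have hpdf : ∀ x : ℝ, gaussianPDFReal 0 1 x * Real.exp (l * x ^ 2)
      = (Real.sqrt (2 * Real.pi))⁻¹ * Real.exp (-(1 / 2 - l) * x ^ 2) := by
    intro x
    simp only [gaussianPDFReal, NNReal.coe_one, mul_one, sub_zero]
    rw [mul_assoc, ← Real.exp_add]
    ring_nf
  have hmeas : Measurable (gaussianPDF 0 1) :=
    (measurable_gaussianPDFReal 0 1).ennreal_ofReal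
  have hint : Integrable (fun x => (Real.sqrt (2 * Real.pi))⁻¹
      * Real.exp (-(1 / 2 - l) * x ^ 2)) := by
    exact (integrable_exp_neg_mul_sq hb).const_mul _
  constructor
  · rw [gaussianReal_of_var_ne_zero _ one_ne_zero]
    rw [integrable_withDensity_iff hmeas (Filter.Eventually.of_forall fun x => ENNReal.ofReal_lt_top)]
    have : (fun x => Real.exp (l * x ^ 2) * (gaussianPDF 0 1 x).toReal)
        = fun x => (Real.sqrt (2 * Real.pi))⁻¹ * Real.exp (-(1 / 2 - l) * x ^ 2) := by
      ext x
      rw [gaussianPDF, ENNReal.toReal_ofReal (gaussianPDFReal_nonneg 0 1 x), mul_comm, hpdf]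
    rw [this]
    exact hint
  · rw [gaussianReal_of_var_ne_zero _ one_ne_zero]
    have hgpdf : gaussianPDF 0 1 = fun x => ((gaussianPDFReal 0 1 x).toNNReal : ℝ≥0∞) := rfl
    rw [hgpdf, integral_withDensity_eq_integral_smul (measurable_gaussianPDFReal 0 1).real_toNNReal]
    have : (fun x => (gaussianPDFReal 0 1 x).toNNReal • Real.exp (l * x ^ 2))
        = fun x => (Real.sqrt (2 * Real.pi))⁻¹ * Real.exp (-(1 / 2 - l) * x ^ 2) := by
      ext x
      rw [NNReal.smul_def, smul_eq_mul, Real.coe_toNNReal _ (gaussianPDFReal_nonneg 0 1 x), hpdf]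
    rw [this, integral_const_mul, integral_gaussian]

/-- **Laurent–Massart upper tail of the chi-squared distribution.**
Let `z_1, …, z_m` be i.i.d. standard Gaussian random variables (modeled on the
canonical product space, `μ` the `m`-fold product of `N(0,1)`), and let `t > 0`.  Then
`P(∑ i, z i ^ 2 ≥ m + 2√(m t) + 2 t) ≤ exp (-t)`. -/
theorem chi_squared_upper_tail
    (m : ℕ) (t : ℝ) (ht : 0 < t)
    (μ : Measure (Fin m → ℝ)) (hμ : μ = Measure.pi fun _ : Fin m => gaussianReal 0 1) :
    μ {z | (m : ℝ) + 2 * Real.sqrt ((m : ℝ) * t) + 2 * t ≤ ∑ i, z i ^ 2} ≤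
      ENNReal.ofReal (Real.exp (-t)) := by
  subst hμ
  rcases Nat.eq_zero_or_pos m with hm | hm
  · subst hm
    have hempty : {z : Fin 0 → ℝ | (0 : ℝ) + 2 * Real.sqrt ((0 : ℝ) * t) + 2 * t ≤ ∑ i, z i ^ 2}
        = ∅ := by
      ext z
      simp only [Set.mem_setOf_eq, Set.mem_empty_iff_false, iff_false, not_le,
        Finset.univ_eq_empty, Finset.sum_empty, zero_mul, Real.sqrt_zero, mul_zero]
      linarith
    simp only [Nat.cast_zero, hempty, measure_empty]
    exact zero_le
  · have hm0 : (0:ℝ) < m := by exact_mod_cast hm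
    set s : ℝ := Real.sqrt ((m : ℝ) * t) with hs_def
    have hs2 : s ^ 2 = (m : ℝ) * t := Real.sq_sqrt (by positivity)
    have hs0 : 0 < s := Real.sqrt_pos.mpr (by positivity)
    have hd0 : (0:ℝ) < (m : ℝ) + 2 * s := by positivity
    set l : ℝ := s / ((m : ℝ) + 2 * s) with hl_def
    have hl0 : 0 < l := div_pos hs0 hd0
    have hl2 : 2 * l < 1 := by
      rw [hl_def, mul_div_assoc', div_lt_one hd0]
      linarith
    have hu0 : (0:ℝ) < 1 - 2 * l := by linarith
    clear_value s l
    obtain ⟨hint1, hc⟩ := aux_gaussian_sq l (by linarith)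
    set c : ℝ := ∫ x, Real.exp (l * x ^ 2) ∂(gaussianReal 0 1) with hc_def
    clear_value c
    have hc0 : 0 ≤ c := by
      rw [hc]
      positivity
    have hb2 : (0:ℝ) < 1 / 2 - l := by linarith
    have hcsq : c ^ 2 = 1 / (1 - 2 * l) := by
      rw [hc, mul_pow, inv_pow, Real.sq_sqrt (by positivity : (0:ℝ) ≤ 2 * Real.pi),
        Real.sq_sqrt (div_pos Real.pi_pos hb2).le]
      have h : Real.pi / (1 / 2 - l) = 2 * Real.pi / (1 - 2 * l) := by
        rw [div_eq_div_iff hb2.ne' hu0.ne']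
        ring
      rw [h, ← mul_div_assoc, inv_mul_cancel₀ (by positivity : (2 * Real.pi) ≠ 0)]
    set β : ℝ := l + l ^ 2 / (1 - 2 * l) with hβ_def
    clear_value β
    have hβ0 : 0 ≤ β := by
      have h4 : 0 ≤ l ^ 2 / (1 - 2 * l) := div_nonneg (sq_nonneg l) hu0.le
      rw [hβ_def]
      linarith
    have hcβ : c ≤ Real.exp β := by
      have hy : (0:ℝ) ≤ β + β := by linarith
      have h3 := Real.sum_le_exp_of_nonneg hy 3
      have hsum : ∑ i ∈ range 3, (β + β) ^ i / (Nat.factorial i)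
          = 1 + (β + β) + (β + β) ^ 2 / 2 := by
        rw [Finset.sum_range_succ, Finset.sum_range_succ, Finset.sum_range_one]
        norm_num [Nat.factorial]
      rw [hsum] at h3
      have hsq : c ^ 2 ≤ (Real.exp β) ^ 2 := by
        rw [hcsq, sq, ← Real.exp_add]
        refine le_trans ?_ h3
        have hβval : β + β = (2 * l - 2 * l ^ 2) / (1 - 2 * l) := by
          rw [hβ_def, eq_div_iff hu0.ne', add_mul, add_mul, div_mul_cancel₀ _ hu0.ne']
          ring
        have hdiff : 1 + (β + β) + (β + β) ^ 2 / 2 - 1 / (1 - 2 * l)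
            = 2 * l ^ 4 / (1 - 2 * l) ^ 2 := by
          rw [hβval]
          field_simp
          ring
        have hpos : 0 ≤ 2 * l ^ 4 / (1 - 2 * l) ^ 2 := by positivity
        linarith
      nlinarith [Real.exp_pos β, hc0]
    set a : ℝ := (m : ℝ) + 2 * s + 2 * t with ha_def
    clear_value a
    have hS : ∀ z : Fin m → ℝ, Real.exp (l * ∑ i, z i ^ 2)
        = ∏ i, Real.exp (l * z i ^ 2) := by
      intro z
      rw [Finset.mul_sum, Real.exp_sum]
    have hint : Integrable (fun z : Fin m → ℝ => Real.exp (l * ∑ i, z i ^ 2))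
        (Measure.pi fun _ : Fin m => gaussianReal 0 1) := by
      have := aux_integrable_pi_prod (n := m) (f := fun x => Real.exp (l * x ^ 2)) hint1
      simpa only [← hS] using this
    have hmgf : mgf (fun z : Fin m → ℝ => ∑ i, z i ^ 2)
        (Measure.pi fun _ : Fin m => gaussianReal 0 1) l = c ^ m := by
      rw [mgf, hc_def]
      simp_rw [hS]
      exact aux_integral_pi_prod (gaussianReal 0 1) (fun x => Real.exp (l * x ^ 2))
    haveI hfin : IsFiniteMeasure (Measure.pi fun _ : Fin m => gaussianReal 0 1) := inferInstance
    have hcher := @measure_ge_le_exp_mul_mgf (Fin m → ℝ) _ (fun z => ∑ i, z i ^ 2)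
      (Measure.pi fun _ : Fin m => gaussianReal 0 1) l hfin a hl0.le hint
    rw [hmgf] at hcher
    have hfinal : Real.exp (-l * a) * c ^ m ≤ Real.exp (-t) := by
      calc Real.exp (-l * a) * c ^ m
          ≤ Real.exp (-l * a) * (Real.exp β) ^ m := by
            gcongr
        _ = Real.exp (-l * a + m * β) := by
            rw [← Real.exp_nat_mul, ← Real.exp_add]
        _ = Real.exp (-t) := by
            congr 1
            have ht' : t = s ^ 2 / (m : ℝ) := by
              rw [hs2]; field_simp
            rw [ha_def, hβ_def, hl_def, ht']
            have hne : ((m : ℝ) + 2 * s) ≠ 0 := ne_of_gt hd0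
            have h1 : 1 - 2 * (s / ((m : ℝ) + 2 * s)) = (m : ℝ) / ((m : ℝ) + 2 * s) := by
              field_simp
              ring
            rw [h1]
            field_simp
            ring
    rw [← ENNReal.ofReal_toReal (measure_ne_top _ _)]
    exact ENNReal.ofReal_le_ofReal (hcher.trans hfinal)
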